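/- arXiv:2408.07898 — 8 statements merged into one kernel-verified Lean document; each statement's English description precedes it below -/
import Mathlib

section
/- Let M be an invertible n×n matrix over F_2 and let N be obtained from M by a single CNOT operation (adding row i to row j, i≠j). Then |v(M) − v(N)| ≤ 1, where v(·) denotes the number of connected components of the vertex-connectivity graph. -/
open Matrix

variable {n : ℕ}

/-- Vertex-connectivity graph `G_v(M)`: edge between distinct `i, j` iff `M i j = 1` or `M j i = 1`. -/
def Gv (M : Matrix (Fin n) (Fin n) (ZMod 2)) : SimpleGraph (Fin n) :=
  SimpleGraph.fromRel (fun i j => M i j = 1)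

/-- `v(M)`: number of connected components of `G_v(M)`. -/
noncomputable def vcomp (M : Matrix (Fin n) (Fin n) (ZMod 2)) : ℕ :=
  Nat.card (Gv M).ConnectedComponent

/-- Edge-connectivity graph `G_e(M)`: `inl i` is row `R_i`, `inr j` is column `C_j`;
edge `R_i – C_j` iff `M i j = 1`. -/
def Ge (M : Matrix (Fin n) (Fin n) (ZMod 2)) : SimpleGraph (Fin n ⊕ Fin n) :=
  SimpleGraph.fromRel (fun x y => ∃ i j, x = Sum.inl i ∧ y = Sum.inr j ∧ M i j = 1)

/-- `e(M)`: number of connected components of `G_e(M)`. -/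
noncomputable def ecomp (M : Matrix (Fin n) (Fin n) (ZMod 2)) : ℕ :=
  Nat.card (Ge M).ConnectedComponent

/-- The result of the CNOT operation `CNOT(i,j)`: add row `i` of `M` to row `j` over `F_2`. -/
def cnotStep (M : Matrix (Fin n) (Fin n) (ZMod 2)) (i j : Fin n) :
    Matrix (Fin n) (Fin n) (ZMod 2) :=
  M.updateRow j (M i + M j)

/-- A river of `M`: a permutation `σ` with `M k (σ k) = 1` for all `k`. -/
def IsRiver (M : Matrix (Fin n) (Fin n) (ZMod 2)) (σ : Equiv.Perm (Fin n)) : Prop :=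
  ∀ k, M k (σ k) = 1

instance (M : Matrix (Fin n) (Fin n) (ZMod 2)) : DecidablePred (IsRiver M) := fun σ => by
  unfold IsRiver; exact Fintype.decidableForallFintype

/-- A CNOT gate matrix: `I + E_{j,i}` for `i ≠ j` (left-multiplication adds row `i` to row `j`). -/
def IsCNOT (E : Matrix (Fin n) (Fin n) (ZMod 2)) : Prop :=
  ∃ i j : Fin n, i ≠ j ∧ E = 1 + Matrix.single j i 1

/-- `s(M)`: the minimum number of CNOT gate matrices whose product is `M`. -/
noncomputable def synthSize (M : Matrix (Fin n) (Fin n) (ZMod 2)) : ℕ :=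
  sInf {k | ∃ L : List (Matrix (Fin n) (Fin n) (ZMod 2)),
    L.length = k ∧ (∀ E ∈ L, IsCNOT E) ∧ L.prod = M}

/-- The permutation matrix `P_σ` with `(P_σ)_{i, σ(i)} = 1`. -/
def Pmat (σ : Equiv.Perm (Fin n)) : Matrix (Fin n) (Fin n) (ZMod 2) :=
  Matrix.of fun i j => if σ i = j then 1 else 0


open SimpleGraph

/-- The single-edge graph joining `i` and `j`. -/
private def edgeG {V : Type*} (i j : V) : SimpleGraph V :=
  SimpleGraph.fromRel (fun a b => a = i ∧ b = j)

private lemma reach_of_reach {V : Type*} {G H : SimpleGraph V}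
    (hGH : ∀ u v, G.Adj u v → H.Reachable u v) {u v : V} (h : G.Reachable u v) :
    H.Reachable u v := by
  obtain ⟨w⟩ := h
  induction w with
  | nil => exact Reachable.refl _
  | cons h p ih => exact (hGH _ _ h).trans ih

private lemma reach_decomp {V : Type*} {G : SimpleGraph V} {i j : V} {u v : V}
    (h : (G ⊔ edgeG i j).Reachable u v) :
    G.Reachable u v ∨ (G.Reachable u i ∧ G.Reachable j v) ∨
      (G.Reachable u j ∧ G.Reachable i v) := by
  obtain ⟨w⟩ := h
  induction w with
  | nil => exact Or.inl (Reachable.refl _)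
  | @cons u x v h p ih =>
    rcases h with h | h
    · have hr : G.Reachable u x := h.reachable
      rcases ih with h1 | ⟨h1, h2⟩ | ⟨h1, h2⟩
      · exact Or.inl (hr.trans h1)
      · exact Or.inr (Or.inl ⟨hr.trans h1, h2⟩)
      · exact Or.inr (Or.inr ⟨hr.trans h1, h2⟩)
    · obtain ⟨hne, hc⟩ := h
      rcases hc with ⟨hu, hx⟩ | ⟨hx, hu⟩
      · subst hu; subst hx
        rcases ih with h1 | ⟨h1, h2⟩ | ⟨h1, h2⟩
        · exact Or.inr (Or.inl ⟨Reachable.refl _, h1⟩)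
        · exact Or.inr (Or.inl ⟨Reachable.refl _, h2⟩)
        · exact Or.inl h2
      · subst hu; subst hx
        rcases ih with h1 | ⟨h1, h2⟩ | ⟨h1, h2⟩
        · exact Or.inr (Or.inr ⟨Reachable.refl _, h1⟩)
        · exact Or.inl h2
        · exact Or.inr (Or.inr ⟨Reachable.refl _, h2⟩)

private lemma card_cc_le {V : Type*} [Finite V] {G H : SimpleGraph V}
    (h : ∀ u v, G.Adj u v → H.Reachable u v) :
    Nat.card H.ConnectedComponent ≤ Nat.card G.ConnectedComponent := by
  haveI : Finite G.ConnectedComponent :=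
    Finite.of_surjective G.connectedComponentMk (fun c => c.exists_rep)
  have hsurj : Function.Surjective
      (ConnectedComponent.lift (fun v => H.connectedComponentMk v)
        (fun v w p _ => ConnectedComponent.eq.mpr (reach_of_reach h p.reachable)) :
        G.ConnectedComponent → H.ConnectedComponent) := by
    intro c
    refine c.ind (fun v => ?_)
    exact ⟨G.connectedComponentMk v, rfl⟩
  exact Nat.card_le_card_of_surjective _ hsurj

private lemma card_cc_addedge {V : Type*} [Finite V] (G : SimpleGraph V) (i j : V) :
    Nat.card G.ConnectedComponent ≤ Nat.card (G ⊔ edgeG i j).ConnectedComponent + 1 := by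
  classical
  set H := G ⊔ edgeG i j with hH
  have hle : ∀ u v, G.Adj u v → H.Reachable u v := fun u v h => ((sup_adj _ _ _ _).mpr (Or.inl h) : H.Adj u v).reachable
  let push : G.ConnectedComponent → H.ConnectedComponent :=
    ConnectedComponent.lift (fun v => H.connectedComponentMk v)
      (fun v w p _ => ConnectedComponent.eq.mpr (reach_of_reach hle p.reachable))
  let f : G.ConnectedComponent → Option H.ConnectedComponent :=
    fun c => if c = G.connectedComponentMk j then none else some (push c)
  have hinj : Function.Injective f := by
    intro c1 c2 hf
    by_cases h1 : c1 = G.connectedComponentMk j <;>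
      by_cases h2 : c2 = G.connectedComponentMk j
    · rw [h1, h2]
    · simp only [f, if_pos h1, if_neg h2] at hf; exact absurd hf.symm (Option.some_ne_none _)
    · simp only [f, if_neg h1, if_pos h2] at hf; exact absurd hf (Option.some_ne_none _)
    · simp only [f, if_neg h1, if_neg h2, Option.some.injEq] at hf
      obtain ⟨u, rfl⟩ := c1.exists_rep
      obtain ⟨v, rfl⟩ := c2.exists_rep
      have hr : H.Reachable u v := ConnectedComponent.eq.mp hf
      rcases reach_decomp hr with hd | ⟨hd1, hd2⟩ | ⟨hd1, hd2⟩
      · exact ConnectedComponent.eq.mpr hd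
      · exact absurd (ConnectedComponent.eq.mpr hd2.symm) h2
      · exact absurd (ConnectedComponent.eq.mpr hd1) h1
  haveI : Finite H.ConnectedComponent :=
    Finite.of_surjective H.connectedComponentMk (fun c => c.exists_rep)
  haveI hF : Fintype H.ConnectedComponent := Fintype.ofFinite _
  have hle2 : Nat.card G.ConnectedComponent ≤ Nat.card (Option H.ConnectedComponent) :=
    Nat.card_le_card_of_injective f hinj
  have hoc : Nat.card (Option H.ConnectedComponent) = Nat.card H.ConnectedComponent + 1 := by
    simp [Nat.card_eq_fintype_card]
  exact hle2.trans hoc.le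

private lemma zmod2_add_eq_one {x y : ZMod 2} (h : x + y = 1) : x = 1 ∨ y = 1 := by
  revert h; revert x y; decide

private lemma key_ineq (M : Matrix (Fin n) (Fin n) (ZMod 2)) (i j : Fin n) (hij : i ≠ j) :
    vcomp M ≤ vcomp (cnotStep M i j) + 1 := by
  set N := cnotStep M i j with hN
  have hedge : ∀ a b : Fin n, a ≠ b → N a b = 1 → (Gv M ⊔ edgeG i j).Reachable a b := by
    intro a b hab h1
    have hij' : (edgeG i j).Adj j i := ⟨hij.symm, Or.inr ⟨rfl, rfl⟩⟩
    by_cases haj : a = j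
    · rw [haj] at h1 hab ⊢
      have : M i b + M j b = 1 := by
        rw [hN] at h1
        simpa [cnotStep, Matrix.updateRow_self] using h1
      rcases zmod2_add_eq_one this with hi | hjv
      · by_cases hib : i = b
        · subst hib
          exact (((sup_adj _ _ _ _).mpr (Or.inr hij') : (Gv M ⊔ edgeG i j).Adj j i)).reachable
        · have h2 : (Gv M).Adj i b := ⟨hib, Or.inl hi⟩
          exact ((((sup_adj _ _ _ _).mpr (Or.inr hij') : (Gv M ⊔ edgeG i j).Adj j i)).reachable).trans
            (((sup_adj _ _ _ _).mpr (Or.inl h2) : (Gv M ⊔ edgeG i j).Adj i b)).reachable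
      · exact (((sup_adj _ _ _ _).mpr (Or.inl (⟨hab, Or.inl hjv⟩ : (Gv M).Adj j b)) :
          (Gv M ⊔ edgeG i j).Adj j b)).reachable
    · have : M a b = 1 := by
        rw [hN] at h1
        simpa [cnotStep, Matrix.updateRow_ne haj] using h1
      exact (((sup_adj _ _ _ _).mpr (Or.inl (⟨hab, Or.inl this⟩ : (Gv M).Adj a b)) :
        (Gv M ⊔ edgeG i j).Adj a b)).reachable
  have hA : ∀ a b : Fin n, (Gv N).Adj a b → (Gv M ⊔ edgeG i j).Reachable a b := by
    intro a b h
    obtain ⟨hab, h | h⟩ := h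
    · exact hedge a b hab h
    · exact (hedge b a (Ne.symm hab) h).symm
  calc vcomp M ≤ Nat.card (Gv M ⊔ edgeG i j).ConnectedComponent + 1 :=
        card_cc_addedge (Gv M) i j
    _ ≤ vcomp N + 1 := Nat.add_le_add_right (card_cc_le hA) 1

private lemma cnot_involutive (M : Matrix (Fin n) (Fin n) (ZMod 2)) (i j : Fin n)
    (hij : i ≠ j) : cnotStep (cnotStep M i j) i j = M := by
  have hz : ∀ x y : ZMod 2, x + (x + y) = y := by decide
  ext a b
  by_cases haj : a = j
  · subst haj
    simp [cnotStep, Matrix.updateRow_ne hij, hz]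
  · simp [cnotStep, Matrix.updateRow_ne haj]

/-- A single CNOT operation changes `v(M)` by at most one. -/
theorem stmt1 (n : ℕ) (M : Matrix (Fin n) (Fin n) (ZMod 2)) (hM : IsUnit M)
    (i j : Fin n) (hij : i ≠ j) :
    |(vcomp M : ℤ) - (vcomp (cnotStep M i j) : ℤ)| ≤ 1 := by
  have h1 := key_ineq M i j hij
  have h2 := key_ineq (cnotStep M i j) i j hij
  rw [cnot_involutive M i j hij] at h2
  have h1' : (vcomp M : ℤ) ≤ (vcomp (cnotStep M i j) : ℤ) + 1 := by exact_mod_cast h1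
  have h2' : (vcomp (cnotStep M i j) : ℤ) ≤ (vcomp M : ℤ) + 1 := by exact_mod_cast h2
  rw [abs_le]
  constructor <;> linarith
end

section
/- Let M be an invertible n×n matrix over F_2 and let N be obtained from M by a single CNOT operation. Then |e(M) − e(N)| ≤ 1, where e(·) denotes the number of connected components of the edge-connectivity graph. -/
open Matrix

variable {n : ℕ}

/-!
Row `j` of `CNOT(i,j) M` is the sum of rows `i` and `j` of `M`, so every edge `R_j – C_b` of
`G_e(CNOT(i,j) M)` comes from an edge `R_i – C_b` or `R_j – C_b` of `G_e(M)`. Hence every edge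
of `G_e(CNOT(i,j) M)` joins vertices connected in `G_e(M)` plus the extra edge `R_j – R_i`, and
adding an edge merges at most two components: `e(M) ≤ e(CNOT(i,j) M) + 1`. Since `CNOT(i,j)` is
an involution, the reverse inequality follows by symmetry.
-/

namespace SimpleGraph

variable {V : Type*}

theorem reachable_sup_edge_self (G : SimpleGraph V) (u v : V) : (G ⊔ edge u v).Reachable u v := by
  rcases eq_or_ne u v with rfl | huv
  · rfl
  · exact Adj.reachable (Or.inr ((edge_adj u v u v).2 ⟨Or.inl ⟨rfl, rfl⟩, huv⟩))

theorem Reachable.of_sup_edge {G : SimpleGraph V} {u v x y : V}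
    (h : (G ⊔ edge u v).Reachable x y) :
    G.Reachable x y ∨ (G.Reachable x u ∧ G.Reachable v y) ∨
      (G.Reachable x v ∧ G.Reachable u y) := by
  obtain ⟨p⟩ := h
  induction p with
  | nil => exact Or.inl .rfl
  | @cons a b c hab p ih =>
    rcases hab with hab | hab
    · have hab := hab.reachable
      rcases ih with h | ⟨h₁, h₂⟩ | ⟨h₁, h₂⟩
      · exact Or.inl (hab.trans h)
      · exact Or.inr (Or.inl ⟨hab.trans h₁, h₂⟩)
      · exact Or.inr (Or.inr ⟨hab.trans h₁, h₂⟩)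
    obtain ⟨⟨rfl, rfl⟩ | ⟨rfl, rfl⟩, -⟩ := (edge_adj _ _ _ _).1 hab
    · rcases ih with h | ⟨-, h⟩ | ⟨-, h⟩
      · exact Or.inr (Or.inl ⟨.rfl, h⟩)
      · exact Or.inr (Or.inl ⟨.rfl, h⟩)
      · exact Or.inl h
    · rcases ih with h | ⟨-, h⟩ | ⟨-, h⟩
      · exact Or.inr (Or.inr ⟨.rfl, h⟩)
      · exact Or.inl h
      · exact Or.inr (Or.inr ⟨.rfl, h⟩)

namespace ConnectedComponent

theorem card_le_card_of_forall_adj_reachable [Finite V] {G H : SimpleGraph V}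
    (h : ∀ ⦃x y⦄, G.Adj x y → H.Reachable x y) :
    Nat.card H.ConnectedComponent ≤ Nat.card G.ConnectedComponent := by
  have hGH : ∀ ⦃x y⦄, G.Reachable x y → H.Reachable x y := fun x y hxy => by
    rw [reachable_iff_reflTransGen] at hxy ⊢
    exact hxy.lift' id fun a b hab => (reachable_iff_reflTransGen a b).1 (h hab)
  let f : G.ConnectedComponent → H.ConnectedComponent :=
    ConnectedComponent.lift H.connectedComponentMk fun _ _ p _ =>
      ConnectedComponent.sound (hGH p.reachable)
  refine Nat.card_le_card_of_surjective f fun c => ?_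
  induction c using ConnectedComponent.ind with
  | h x => exact ⟨G.connectedComponentMk x, rfl⟩

/-- Only the component of `v` can be lost by adding the edge `u – v`. -/
theorem card_le_card_sup_edge_add_one [Finite V] (G : SimpleGraph V) (u v : V) :
    Nat.card G.ConnectedComponent ≤ Nat.card (G ⊔ edge u v).ConnectedComponent + 1 := by
  classical
  let f : G.ConnectedComponent → Option (G ⊔ edge u v).ConnectedComponent := fun c =>
    if c = G.connectedComponentMk v then none else some (c.map (Hom.ofLE le_sup_left))
  have hf : f.Injective := by
    intro c d hcd
    induction c, d using ConnectedComponent.ind₂ with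
    | h x y =>
    by_cases hx : G.connectedComponentMk x = G.connectedComponentMk v <;>
      by_cases hy : G.connectedComponentMk y = G.connectedComponentMk v <;>
      simp only [f, hx, hy, if_true, if_false, reduceCtorEq, Option.some_inj] at hcd
    · exact hx.trans hy.symm
    · simp only [map_mk, Hom.coe_ofLE, id_eq, ConnectedComponent.eq] at hcd
      rcases hcd.of_sup_edge with h | ⟨-, h⟩ | ⟨h, -⟩
      · exact ConnectedComponent.sound h
      · exact absurd (ConnectedComponent.sound h.symm) hy
      · exact absurd (ConnectedComponent.sound h) hx
  calc Nat.card G.ConnectedComponent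
      ≤ Nat.card (Option (G ⊔ edge u v).ConnectedComponent) :=
        Nat.card_le_card_of_injective f hf
    _ = Nat.card (G ⊔ edge u v).ConnectedComponent + 1 := Finite.card_option

end ConnectedComponent

end SimpleGraph

open SimpleGraph

theorem Ge_adj_inl_inr (M : Matrix (Fin n) (Fin n) (ZMod 2)) (a b : Fin n) :
    (Ge M).Adj (Sum.inl a) (Sum.inr b) ↔ M a b = 1 := by
  simp [Ge]

theorem cnotStep_cnotStep (M : Matrix (Fin n) (Fin n) (ZMod 2)) {i j : Fin n} (hij : i ≠ j) :
    cnotStep (cnotStep M i j) i j = M := by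
  have hF₂ : ∀ x y : ZMod 2, x + (x + y) = y := by decide
  ext a b
  rcases eq_or_ne a j with rfl | ha
  · simp [cnotStep, updateRow_ne hij, hF₂]
  · simp [cnotStep, updateRow_ne ha]

theorem reachable_sup_edge_of_cnotStep_apply_eq_one (M : Matrix (Fin n) (Fin n) (ZMod 2))
    {i j a b : Fin n} (hab : cnotStep M i j a b = 1) :
    (Ge M ⊔ edge (Sum.inl j) (Sum.inl i)).Reachable (Sum.inl a) (Sum.inr b) := by
  have hGe : ∀ {a}, M a b = 1 →
      (Ge M ⊔ edge (Sum.inl j) (Sum.inl i)).Reachable (Sum.inl a) (Sum.inr b) :=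
    fun h => Adj.reachable (Or.inl ((Ge_adj_inl_inr M _ b).2 h))
  rcases eq_or_ne a j with rfl | ha
  · have hsum : M i b + M a b = 1 := by simpa [cnotStep] using hab
    have hF₂ : ∀ x y : ZMod 2, x + y = 1 → x = 1 ∨ y = 1 := by decide
    rcases hF₂ _ _ hsum with hi | ha
    · exact (reachable_sup_edge_self _ _ _).trans (hGe hi)
    · exact hGe ha
  · exact hGe (by simpa [cnotStep, updateRow_ne ha] using hab)

theorem ecomp_le_ecomp_cnotStep_add_one (M : Matrix (Fin n) (Fin n) (ZMod 2)) (i j : Fin n) :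
    ecomp M ≤ ecomp (cnotStep M i j) + 1 := by
  have hreach : ∀ ⦃x y⦄, (Ge (cnotStep M i j)).Adj x y →
      (Ge M ⊔ edge (Sum.inl j) (Sum.inl i)).Reachable x y := by
    intro x y hxy
    rcases (fromRel_adj _ _ _).1 hxy with ⟨-, ⟨a, b, rfl, rfl, h⟩ | ⟨a, b, rfl, rfl, h⟩⟩
    · exact reachable_sup_edge_of_cnotStep_apply_eq_one M h
    · exact (reachable_sup_edge_of_cnotStep_apply_eq_one M h).symm
  exact (ConnectedComponent.card_le_card_sup_edge_add_one _ _ _).trans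
    (Nat.add_le_add_right (ConnectedComponent.card_le_card_of_forall_adj_reachable hreach) 1)

theorem stmt2_general (n : ℕ) (M : Matrix (Fin n) (Fin n) (ZMod 2))
    (i j : Fin n) (hij : i ≠ j) :
    |(ecomp M : ℤ) - (ecomp (cnotStep M i j) : ℤ)| ≤ 1 := by
  have h₁ := ecomp_le_ecomp_cnotStep_add_one M i j
  have h₂ := ecomp_le_ecomp_cnotStep_add_one (cnotStep M i j) i j
  rw [cnotStep_cnotStep M hij] at h₂
  rw [abs_sub_le_iff]
  omega

/-- A single CNOT operation changes `e(M)` by at most one. -/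
theorem stmt2 (n : ℕ) (M : Matrix (Fin n) (Fin n) (ZMod 2)) (hM : IsUnit M)
    (i j : Fin n) (hij : i ≠ j) :
    |(ecomp M : ℤ) - (ecomp (cnotStep M i j) : ℤ)| ≤ 1 :=
  stmt2_general n M i j hij
end

section
/- Let M be an invertible n×n matrix over F_2 and let N be obtained from M by a single CNOT operation. If v(N) = v(M) − 1 (the operation is a link gate), then e(N) = e(M) − 1. -/
open Matrix

variable {n : ℕ}

/-! ### Auxiliary general graph lemmas -/

namespace CnotAux

variable {V : Type*}

/-- Star graph attaching `x` to every vertex of `S`. -/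
def starG (x : V) (S : Set V) : SimpleGraph V :=
  SimpleGraph.fromRel (fun u w => u = x ∧ w ∈ S)

lemma walk_closure {K : SimpleGraph V} (P : V → Prop)
    (h : ∀ u v, P u → K.Adj u v → P v) :
    ∀ {a b : V}, K.Walk a b → P a → P b := by
  intro a b w
  induction w with
  | nil => exact id
  | cons hadj _ ih => exact fun ha => ih (h _ _ ha hadj)

lemma reach_closure {K : SimpleGraph V} (P : V → Prop)
    (h : ∀ u v, P u → K.Adj u v → P v) {a b : V}
    (hr : K.Reachable a b) (ha : P a) : P b :=
  hr.elim fun w => walk_closure P h w ha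

lemma isolated_reachable {H : SimpleGraph V} {x v : V}
    (hx : ∀ y, ¬ H.Adj x y) (h : H.Reachable x v) : v = x := by
  refine reach_closure (K := H) (fun w => w = x) ?_ h rfl
  rintro u v rfl hadj
  exact absurd hadj (hx v)

lemma starG_adj {x : V} {S : Set V} {u w : V} :
    (starG x S).Adj u w ↔ u ≠ w ∧ ((u = x ∧ w ∈ S) ∨ (w = x ∧ u ∈ S)) := by
  simp [starG, SimpleGraph.fromRel_adj]

/-- Claim A: vertices reachable from `x` in `H ⊔ starG x S`. -/
lemma claimA {H : SimpleGraph V} {x : V} {S : Set V}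
    (hx : ∀ y, ¬ H.Adj x y) (hxS : x ∉ S) {v : V}
    (h : (H ⊔ starG x S).Reachable x v) :
    v = x ∨ ∃ s ∈ S, H.Reachable s v := by
  refine reach_closure (K := H ⊔ starG x S)
    (fun w => w = x ∨ ∃ s ∈ S, H.Reachable s w) ?_ h (Or.inl rfl)
  rintro u v hu hadj
  rcases hadj with hadj | hadj
  · rcases hu with rfl | ⟨s, hs, hr⟩
    · exact absurd hadj (hx v)
    · exact Or.inr ⟨s, hs, hr.trans hadj.reachable⟩
  · rw [starG_adj] at hadj
    rcases hadj.2 with ⟨rfl, hv⟩ | ⟨rfl, hu'⟩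
    · exact Or.inr ⟨v, hv, SimpleGraph.Reachable.refl v⟩
    · exact Or.inl rfl

/-- Claim C: reachability not through `x`'s component is `H`-reachability. -/
lemma claimC {H : SimpleGraph V} {x : V} {S : Set V} {u v : V}
    (h : (H ⊔ starG x S).Reachable u v)
    (hne : ¬ (H ⊔ starG x S).Reachable u x) : H.Reachable u v := by
  refine reach_closure (K := H ⊔ starG x S) (fun w => H.Reachable u w) ?_ h
    (SimpleGraph.Reachable.refl u)
  rintro a b ha hadj
  rcases hadj with hadj | hadj
  · exact ha.trans hadj.reachable
  · rw [starG_adj] at hadj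
    exfalso
    rcases hadj with ⟨hab, ⟨rfl, _⟩ | ⟨rfl, hmem⟩⟩
    · exact hne (ha.mono le_sup_left)
    · refine hne ((ha.mono le_sup_left).trans (SimpleGraph.Adj.reachable ?_))
      exact Or.inr (starG_adj.mpr ⟨hab, Or.inr ⟨rfl, hmem⟩⟩)

open SimpleGraph in
/-- Key counting lemma: attaching a star at an isolated vertex `x` to the set `S`
merges the components meeting `S` with that of `x`. -/
lemma count [Finite V] (H : SimpleGraph V) (x : V) (S : Set V)
    (hx : ∀ y, ¬ H.Adj x y) (hxS : x ∉ S) :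
    Nat.card (H ⊔ starG x S).ConnectedComponent
      + ({c | ∃ s ∈ S, H.connectedComponentMk s = c} : Set H.ConnectedComponent).ncard
      = Nat.card H.ConnectedComponent := by
  classical
  set K := H ⊔ starG x S with hK
  have hwd : ∀ (v w : V), H.Reachable v w →
      K.connectedComponentMk v = K.connectedComponentMk w := by
    intro v w hr
    exact ConnectedComponent.sound (hr.mono le_sup_left)
  let φ : H.ConnectedComponent → K.ConnectedComponent :=
    ConnectedComponent.lift (fun v => K.connectedComponentMk v)
      (fun v w p _ => hwd v w p.reachable)
  have hφmk : ∀ v, φ (H.connectedComponentMk v) = K.connectedComponentMk v := fun _ => rfl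
  set cx := K.connectedComponentMk x with hcx
  set Q : H.ConnectedComponent → Prop := fun d => ∃ s ∈ S, H.connectedComponentMk s = d with hQ
  set P : H.ConnectedComponent → Prop := fun d => Q d ∨ d = H.connectedComponentMk x with hP
  have key : ∀ d, φ d = cx → P d := by
    refine ConnectedComponent.ind ?_
    intro v hv
    rw [hφmk] at hv
    have hr : K.Reachable x v := (ConnectedComponent.exact hv.symm)
    rcases claimA hx hxS hr with rfl | ⟨s, hs, hsr⟩
    · exact Or.inr rfl
    · exact Or.inl ⟨s, hs, ConnectedComponent.sound hsr⟩
  let Φ : H.ConnectedComponent → {c : K.ConnectedComponent // c ≠ cx} ⊕ {d : H.ConnectedComponent // P d} :=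
    fun d => if h : φ d = cx then Sum.inr ⟨d, key d h⟩ else Sum.inl ⟨φ d, h⟩
  have hΦbij : Function.Bijective Φ := by
    constructor
    · intro d₁ d₂ h
      by_cases h1 : φ d₁ = cx <;> by_cases h2 : φ d₂ = cx <;>
        simp only [Φ, h1, h2, dif_pos, dif_neg, not_false_iff] at h
      · exact Subtype.ext_iff.mp (Sum.inr_injective h)
      · exact absurd h (by simp)
      · exact absurd h (by simp)
      · have h' : φ d₁ = φ d₂ := Subtype.ext_iff.mp (Sum.inl_injective h)
        have inj2 : ∀ d₁ d₂ : H.ConnectedComponent, φ d₁ ≠ cx → φ d₁ = φ d₂ → d₁ = d₂ := by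
          refine ConnectedComponent.ind₂ ?_
          intro v w hv he
          rw [hφmk] at hv
          rw [hφmk, hφmk] at he
          have hr : K.Reachable v w := ConnectedComponent.exact he
          have hnr : ¬ K.Reachable v x := fun hc => hv (ConnectedComponent.sound hc)
          exact ConnectedComponent.sound (claimC hr hnr)
        exact inj2 d₁ d₂ h1 h'
    · rintro (⟨c, hc⟩ | ⟨d, hd⟩)
      · revert hc
        refine ConnectedComponent.ind (fun v hc => ?_) c
        refine ⟨H.connectedComponentMk v, ?_⟩
        have : φ (H.connectedComponentMk v) = K.connectedComponentMk v := rfl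
        simp only [Φ, this, dif_neg hc]
      · refine ⟨d, ?_⟩
        have hdc : φ d = cx := by
          rcases hd with ⟨s, hs, rfl⟩ | rfl
          · rw [hφmk, hcx]
            refine (ConnectedComponent.sound ?_).symm
            refine SimpleGraph.Adj.reachable ?_
            refine Or.inr (starG_adj.mpr ⟨?_, Or.inl ⟨rfl, hs⟩⟩)
            rintro rfl; exact hxS hs
          · exact hφmk x
        simp only [Φ, dif_pos hdc]
  have hcard1 : Nat.card H.ConnectedComponent
      = Nat.card {c : K.ConnectedComponent // c ≠ cx} + Nat.card {d : H.ConnectedComponent // P d} := by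
    rw [Nat.card_congr (Equiv.ofBijective Φ hΦbij), Nat.card_sum]
  have hcard2 : Nat.card K.ConnectedComponent
      = 1 + Nat.card {c : K.ConnectedComponent // c ≠ cx} := by
    rw [← Nat.card_congr (Equiv.sumCompl (fun c => c = cx)), Nat.card_sum]
    congr 1
    haveI : Unique {c : K.ConnectedComponent // c = cx} :=
      ⟨⟨⟨cx, rfl⟩⟩, by rintro ⟨c, rfl⟩; rfl⟩
    exact Nat.card_unique
  have hdisj : ∀ d, Q d → d = H.connectedComponentMk x → False := by
    rintro d ⟨s, hs, rfl⟩ h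
    have : H.Reachable s x := ConnectedComponent.exact h
    have := isolated_reachable hx this.symm
    exact hxS (this ▸ hs)
  have hcard3 : Nat.card {d : H.ConnectedComponent // P d}
      = Nat.card {d : H.ConnectedComponent // Q d} + 1 := by
    have hdisj' : Disjoint Q (fun d => d = H.connectedComponentMk x) := by
      intro r hrQ hrR d hd
      exact (hdisj d (hrQ d hd) (hrR d hd)).elim
    rw [Nat.card_congr (subtypeOrEquiv Q (fun d => d = H.connectedComponentMk x) hdisj'), Nat.card_sum]
    congr 1
    haveI : Unique {d : H.ConnectedComponent // d = H.connectedComponentMk x} :=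
      ⟨⟨⟨_, rfl⟩⟩, by rintro ⟨d, rfl⟩; rfl⟩
    exact Nat.card_unique
  have hcard4 : ({c | ∃ s ∈ S, H.connectedComponentMk s = c} : Set H.ConnectedComponent).ncard
      = Nat.card {d : H.ConnectedComponent // Q d} := by
    rw [← Nat.card_coe_set_eq]
    congr 1
  rw [hcard4]
  omega

end CnotAux

namespace CnotAux

open Sum SimpleGraph

/-- Normalized bipartite-type graph on `Fin n ⊕ Fin n` given by a relation on indices. -/
def bip (E : Fin n → Fin n → Prop) : SimpleGraph (Fin n ⊕ Fin n) :=
  SimpleGraph.fromRel (fun x y => ∃ a b, E a b ∧ x = Sum.inl a ∧ y = Sum.inr b)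

lemma bip_adj {E : Fin n → Fin n → Prop} {x y : Fin n ⊕ Fin n} :
    (bip E).Adj x y ↔ ∃ a b, E a b ∧
      ((x = Sum.inl a ∧ y = Sum.inr b) ∨ (x = Sum.inr b ∧ y = Sum.inl a)) := by
  rw [bip, SimpleGraph.fromRel_adj]
  constructor
  · rintro ⟨hne, ⟨a, b, h, rfl, rfl⟩ | ⟨a, b, h, rfl, rfl⟩⟩
    · exact ⟨a, b, h, Or.inl ⟨rfl, rfl⟩⟩
    · exact ⟨a, b, h, Or.inr ⟨rfl, rfl⟩⟩
  · rintro ⟨a, b, h, ⟨rfl, rfl⟩ | ⟨rfl, rfl⟩⟩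
    · exact ⟨by simp, Or.inl ⟨a, b, h, rfl, rfl⟩⟩
    · exact ⟨by simp, Or.inr ⟨a, b, h, rfl, rfl⟩⟩

lemma bip_congr {E F : Fin n → Fin n → Prop} (h : ∀ a b, E a b ↔ F a b) :
    bip E = bip F := by
  ext x y
  rw [bip_adj, bip_adj]
  constructor <;> rintro ⟨a, b, hab, hp⟩
  · exact ⟨a, b, (h a b).mp hab, hp⟩
  · exact ⟨a, b, (h a b).mpr hab, hp⟩

lemma bip_sup {E F : Fin n → Fin n → Prop} :
    bip E ⊔ bip F = bip (fun a b => E a b ∨ F a b) := by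
  ext x y
  rw [SimpleGraph.sup_adj, bip_adj, bip_adj, bip_adj]
  constructor
  · rintro (⟨a, b, h, hp⟩ | ⟨a, b, h, hp⟩)
    · exact ⟨a, b, Or.inl h, hp⟩
    · exact ⟨a, b, Or.inr h, hp⟩
  · rintro ⟨a, b, h | h, hp⟩
    · exact Or.inl ⟨a, b, h, hp⟩
    · exact Or.inr ⟨a, b, h, hp⟩

lemma bip_adj_inl_inr {E : Fin n → Fin n → Prop} {a b : Fin n} (h : E a b) :
    (bip E).Adj (Sum.inl a) (Sum.inr b) :=
  bip_adj.mpr ⟨a, b, h, Or.inl ⟨rfl, rfl⟩⟩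

lemma bip_isolated {E : Fin n → Fin n → Prop} {j : Fin n} (h : ∀ b, ¬ E j b) :
    ∀ y, ¬ (bip E).Adj (Sum.inl j) y := by
  intro y hadj
  rw [bip_adj] at hadj
  rcases hadj with ⟨a, b, hab, ⟨ha, _⟩ | ⟨ha, _⟩⟩
  · cases ha; exact h b hab
  · simp at ha

lemma bip_mono {E F : Fin n → Fin n → Prop} (h : ∀ a b, E a b → F a b) :
    bip E ≤ bip F := by
  intro x y hxy
  rw [bip_adj] at hxy ⊢
  obtain ⟨a, b, hab, hp⟩ := hxy
  exact ⟨a, b, h a b hab, hp⟩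

lemma Ge_eq_bip (M : Matrix (Fin n) (Fin n) (ZMod 2)) :
    Ge M = bip (fun a b => M a b = 1) := by
  ext x y
  rw [Ge, SimpleGraph.fromRel_adj, bip, SimpleGraph.fromRel_adj]
  constructor
  · rintro ⟨hne, ⟨a, b, rfl, rfl, h⟩ | ⟨a, b, rfl, rfl, h⟩⟩
    · exact ⟨hne, Or.inl ⟨a, b, h, rfl, rfl⟩⟩
    · exact ⟨hne, Or.inr ⟨a, b, h, rfl, rfl⟩⟩
  · rintro ⟨hne, ⟨a, b, h, rfl, rfl⟩ | ⟨a, b, h, rfl, rfl⟩⟩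
    · exact ⟨hne, Or.inl ⟨a, b, rfl, rfl, h⟩⟩
    · exact ⟨hne, Or.inr ⟨a, b, rfl, rfl, h⟩⟩

/-- The full matching graph `R_k – C_k`. -/
def PmG (n : ℕ) : SimpleGraph (Fin n ⊕ Fin n) := bip (fun a b => a = b)

def Se (M : Matrix (Fin n) (Fin n) (ZMod 2)) (j : Fin n) : Set (Fin n ⊕ Fin n) :=
  {v | ∃ b, v = Sum.inr b ∧ M j b = 1}

def Sv (M : Matrix (Fin n) (Fin n) (ZMod 2)) (j : Fin n) : Set (Fin n ⊕ Fin n) :=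
  {v | ∃ b, v = Sum.inr b ∧ (M j b = 1 ∨ b = j)}

lemma starG_Se_eq (M : Matrix (Fin n) (Fin n) (ZMod 2)) (j : Fin n) :
    starG (Sum.inl j) (Se M j) = bip (fun a b => a = j ∧ M j b = 1) := by
  ext x y
  rw [starG_adj, bip_adj]
  constructor
  · rintro ⟨hne, ⟨rfl, b, rfl, hb⟩ | ⟨rfl, b, rfl, hb⟩⟩
    · exact ⟨j, b, ⟨rfl, hb⟩, Or.inl ⟨rfl, rfl⟩⟩
    · exact ⟨j, b, ⟨rfl, hb⟩, Or.inr ⟨rfl, rfl⟩⟩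
  · rintro ⟨a, b, ⟨rfl, hb⟩, ⟨rfl, rfl⟩ | ⟨rfl, rfl⟩⟩
    · exact ⟨by simp, Or.inl ⟨rfl, b, rfl, hb⟩⟩
    · exact ⟨by simp, Or.inr ⟨rfl, b, rfl, hb⟩⟩

lemma starG_Sv_eq (M : Matrix (Fin n) (Fin n) (ZMod 2)) (j : Fin n) :
    starG (Sum.inl j) (Sv M j) = bip (fun a b => a = j ∧ (M j b = 1 ∨ b = j)) := by
  ext x y
  rw [starG_adj, bip_adj]
  constructor
  · rintro ⟨hne, ⟨rfl, b, rfl, hb⟩ | ⟨rfl, b, rfl, hb⟩⟩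
    · exact ⟨j, b, ⟨rfl, hb⟩, Or.inl ⟨rfl, rfl⟩⟩
    · exact ⟨j, b, ⟨rfl, hb⟩, Or.inr ⟨rfl, rfl⟩⟩
  · rintro ⟨a, b, ⟨rfl, hb⟩, ⟨rfl, rfl⟩ | ⟨rfl, rfl⟩⟩
    · exact ⟨by simp, Or.inl ⟨rfl, b, rfl, hb⟩⟩
    · exact ⟨by simp, Or.inr ⟨rfl, b, rfl, hb⟩⟩

/-- Decomposition of `Ge M` at row `j`. -/
lemma Ge_decomp (M : Matrix (Fin n) (Fin n) (ZMod 2)) (j : Fin n) :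
    Ge M = bip (fun a b => a ≠ j ∧ M a b = 1) ⊔ starG (Sum.inl j) (Se M j) := by
  rw [Ge_eq_bip, starG_Se_eq, bip_sup]
  apply bip_congr
  intro a b
  by_cases h : a = j
  · subst h; tauto
  · tauto

/-- Decomposition of `Ge M ⊔ PmG n` at row `j`. -/
lemma GePm_decomp (M : Matrix (Fin n) (Fin n) (ZMod 2)) (j : Fin n) :
    Ge M ⊔ PmG n = bip (fun a b => (a ≠ j ∧ M a b = 1) ∨ (a ≠ j ∧ a = b))
      ⊔ starG (Sum.inl j) (Sv M j) := by
  rw [Ge_eq_bip, starG_Sv_eq, PmG, bip_sup, bip_sup]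
  apply bip_congr
  intro a b
  by_cases h : a = j
  · subst h
    constructor
    · rintro (h1 | h1)
      · exact Or.inr ⟨rfl, Or.inl h1⟩
      · exact Or.inr ⟨rfl, Or.inr h1.symm⟩
    · rintro (⟨⟨h1, _⟩ | ⟨h1, _⟩⟩ | ⟨_, h1 | h1⟩)
      · exact absurd rfl h1
      · exact absurd rfl h1
      · exact Or.inl h1
      · exact Or.inr h1.symm
  · tauto

end CnotAux

namespace CnotAux

open SimpleGraph

lemma gv_adj₁ {M : Matrix (Fin n) (Fin n) (ZMod 2)} {a b : Fin n}
    (hne : a ≠ b) (h : M a b = 1) : (Gv M).Adj a b := ⟨hne, Or.inl h⟩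

lemma gv_adj₂ {M : Matrix (Fin n) (Fin n) (ZMod 2)} {a b : Fin n}
    (hne : b ≠ a) (h : M a b = 1) : (Gv M).Adj b a := ⟨hne, Or.inr h⟩

lemma vcomp_eq (M : Matrix (Fin n) (Fin n) (ZMod 2)) :
    vcomp M = Nat.card (Ge M ⊔ PmG n).ConnectedComponent := by
  rw [vcomp]
  apply Nat.card_congr
  have hadj1 : ∀ a b : Fin n, M a b = 1 → (Ge M ⊔ PmG n).Adj (Sum.inl a) (Sum.inr b) :=
    fun a b h => Or.inl (by rw [Ge_eq_bip]; exact bip_adj_inl_inr h)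
  have hadj2 : ∀ k : Fin n, (Ge M ⊔ PmG n).Adj (Sum.inl k) (Sum.inr k) :=
    fun k => Or.inr (bip_adj_inl_inr rfl)
  have hstep : ∀ k l : Fin n, (Gv M).Adj k l →
      (Ge M ⊔ PmG n).Reachable (Sum.inl k) (Sum.inl l) := by
    intro k l hkl
    obtain ⟨hne, h | h⟩ := hkl
    · exact (hadj1 k l h).reachable.trans (hadj2 l).reachable.symm
    · exact (hadj2 k).reachable.trans (hadj1 l k h).reachable.symm
  have hreach : ∀ v w, (Gv M).Reachable v w →
      (Ge M ⊔ PmG n).connectedComponentMk (Sum.inl v)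
        = (Ge M ⊔ PmG n).connectedComponentMk (Sum.inl w) := by
    intro v w hr
    refine reach_closure (K := Gv M)
      (fun u => (Ge M ⊔ PmG n).connectedComponentMk (Sum.inl v)
        = (Ge M ⊔ PmG n).connectedComponentMk (Sum.inl u)) ?_ hr rfl
    intro a b ha hadj
    exact ha.trans (ConnectedComponent.sound (hstep a b hadj))
  have hedge : ∀ x y, (Ge M ⊔ PmG n).Adj x y →
      (Gv M).connectedComponentMk (Sum.elim id id x)
        = (Gv M).connectedComponentMk (Sum.elim id id y) := by
    intro x y hxy
    rcases hxy with h | h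
    · rw [Ge_eq_bip, bip_adj] at h
      obtain ⟨a, b, hab, ⟨rfl, rfl⟩ | ⟨rfl, rfl⟩⟩ := h
      · by_cases hab' : a = b
        · subst hab'; rfl
        · exact ConnectedComponent.sound (gv_adj₁ hab' hab).reachable
      · by_cases hab' : a = b
        · subst hab'; rfl
        · exact ConnectedComponent.sound (gv_adj₂ (Ne.symm hab') hab).reachable
    · rw [PmG, bip_adj] at h
      obtain ⟨a, b, rfl, ⟨rfl, rfl⟩ | ⟨rfl, rfl⟩⟩ := h
      · rfl
      · rfl
  have hedge' : ∀ x y, (Ge M ⊔ PmG n).Reachable x y →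
      (Gv M).connectedComponentMk (Sum.elim id id x)
        = (Gv M).connectedComponentMk (Sum.elim id id y) := by
    intro x y hr
    refine reach_closure (K := Ge M ⊔ PmG n)
      (fun u => (Gv M).connectedComponentMk (Sum.elim id id x)
        = (Gv M).connectedComponentMk (Sum.elim id id u)) ?_ hr rfl
    intro a b ha hadj
    exact ha.trans (hedge a b hadj)
  refine ⟨ConnectedComponent.lift (fun k => (Ge M ⊔ PmG n).connectedComponentMk (Sum.inl k))
      (fun v w p _ => hreach v w p.reachable),
    ConnectedComponent.lift (fun x => (Gv M).connectedComponentMk (Sum.elim id id x))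
      (fun x y p _ => hedge' x y p.reachable), ?_, ?_⟩
  · exact ConnectedComponent.ind (fun k => rfl)
  · refine ConnectedComponent.ind (fun v => ?_)
    cases v with
    | inl k => rfl
    | inr k => exact ConnectedComponent.sound (hadj2 k).reachable

end CnotAux

namespace CnotAux

open SimpleGraph

/-- The part of `Ge M` away from row `j`. -/
def DeG (M : Matrix (Fin n) (Fin n) (ZMod 2)) (j : Fin n) : SimpleGraph (Fin n ⊕ Fin n) :=
  bip (fun a b => a ≠ j ∧ M a b = 1)

/-- The part of `Ge M ⊔ PmG n` away from row `j`. -/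
def DvG (M : Matrix (Fin n) (Fin n) (ZMod 2)) (j : Fin n) : SimpleGraph (Fin n ⊕ Fin n) :=
  bip (fun a b => (a ≠ j ∧ M a b = 1) ∨ (a ≠ j ∧ a = b))

lemma Ge_decomp' (M : Matrix (Fin n) (Fin n) (ZMod 2)) (j : Fin n) :
    Ge M = DeG M j ⊔ starG (Sum.inl j) (Se M j) := Ge_decomp M j

lemma GePm_decomp' (M : Matrix (Fin n) (Fin n) (ZMod 2)) (j : Fin n) :
    Ge M ⊔ PmG n = DvG M j ⊔ starG (Sum.inl j) (Sv M j) := GePm_decomp M j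

lemma inl_not_mem_Se (M : Matrix (Fin n) (Fin n) (ZMod 2)) (j : Fin n) :
    Sum.inl j ∉ Se M j := by rintro ⟨b, hb, -⟩; simp at hb

lemma inl_not_mem_Sv (M : Matrix (Fin n) (Fin n) (ZMod 2)) (j : Fin n) :
    Sum.inl j ∉ Sv M j := by rintro ⟨b, hb, -⟩; simp at hb

lemma ecomp_count (M : Matrix (Fin n) (Fin n) (ZMod 2)) (j : Fin n) :
    ecomp M + ({c | ∃ s ∈ Se M j, (DeG M j).connectedComponentMk s = c} :
        Set (DeG M j).ConnectedComponent).ncard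
      = Nat.card (DeG M j).ConnectedComponent := by
  have h := count (DeG M j) (Sum.inl j) (Se M j)
    (bip_isolated (fun b hb => hb.1 rfl)) (inl_not_mem_Se M j)
  rw [ecomp, Ge_decomp' M j]
  exact h

lemma vcomp_count (M : Matrix (Fin n) (Fin n) (ZMod 2)) (j : Fin n) :
    vcomp M + ({c | ∃ s ∈ Sv M j, (DvG M j).connectedComponentMk s = c} :
        Set (DvG M j).ConnectedComponent).ncard
      = Nat.card (DvG M j).ConnectedComponent := by
  have h := count (DvG M j) (Sum.inl j) (Sv M j)
    (bip_isolated (by rintro b (⟨h, -⟩ | ⟨h, -⟩) <;> exact h rfl)) (inl_not_mem_Sv M j)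
  rw [vcomp_eq, GePm_decomp' M j]
  exact h

lemma row_has_one {M : Matrix (Fin n) (Fin n) (ZMod 2)} (hM : IsUnit M) (i : Fin n) :
    ∃ b, M i b = 1 := by
  by_contra h
  push_neg at h
  have hz : ∀ b, M i b = 0 := by
    intro b
    have hb := h b
    revert hb
    generalize M i b = a
    revert a; decide
  obtain ⟨u, hu⟩ := hM
  have hmul : M * (↑u⁻¹ : Matrix (Fin n) (Fin n) (ZMod 2)) = 1 := by
    rw [← hu]; exact u.mul_inv
  have h1 : (M * (↑u⁻¹ : Matrix (Fin n) (Fin n) (ZMod 2))) i i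
      = (1 : Matrix (Fin n) (Fin n) (ZMod 2)) i i := by rw [hmul]
  rw [Matrix.one_apply_eq, Matrix.mul_apply] at h1
  have h0 : ∑ b, M i b * (↑u⁻¹ : Matrix (Fin n) (Fin n) (ZMod 2)) b i = 0 :=
    Finset.sum_eq_zero fun b _ => by rw [hz b, zero_mul]
  rw [h0] at h1
  exact zero_ne_one h1

end CnotAux

/-- A link gate (decreasing `v` by one) also decreases `e` by exactly one. -/
theorem stmt3 (n : ℕ) (M : Matrix (Fin n) (Fin n) (ZMod 2)) (hM : IsUnit M)
    (i j : Fin n) (hij : i ≠ j)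
    (hlink : vcomp (cnotStep M i j) + 1 = vcomp M) :
    ecomp (cnotStep M i j) + 1 = ecomp M := by
  classical
  open CnotAux SimpleGraph in
  set N := cnotStep M i j with hNdef
  have hrowj : ∀ b, N j b = M i b + M j b := by
    intro b
    rw [hNdef]
    simp [cnotStep, Matrix.updateRow_self]
  have hentry : ∀ a b, a ≠ j → N a b = M a b := by
    intro a b ha
    rw [hNdef]
    simp [cnotStep, Matrix.updateRow_ne ha]
  -- ZMod 2 arithmetic facts
  have z1 : ∀ a c : ZMod 2, a + c = 1 → a = 1 ∨ c = 1 := by decide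
  have z2 : ∀ a : ZMod 2, ¬ a = 1 → a = 0 := by decide
  have z3 : ∀ a c : ZMod 2, a = 1 → c = 0 → a + c = 1 := by decide
  have z4 : ∀ a c : ZMod 2, a = 0 → c = 1 → a + c = 1 := by decide
  -- the common parts of the graphs agree for M and N
  have hDeN : CnotAux.DeG N j = CnotAux.DeG M j :=
    CnotAux.bip_congr (fun a b => and_congr_right (fun ha => by rw [hentry a b ha]))
  have hDvN : CnotAux.DvG N j = CnotAux.DvG M j := by
    apply CnotAux.bip_congr
    intro a b
    constructor
    · rintro (⟨ha, h⟩ | h)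
      · exact Or.inl ⟨ha, by rw [← hentry a b ha]; exact h⟩
      · exact Or.inr h
    · rintro (⟨ha, h⟩ | h)
      · exact Or.inl ⟨ha, by rw [hentry a b ha]; exact h⟩
      · exact Or.inr h
  -- counting equations
  have e1 := CnotAux.ecomp_count M j
  have e2 := CnotAux.ecomp_count N j
  rw [hDeN] at e2
  have v1 := CnotAux.vcomp_count M j
  have v2 := CnotAux.vcomp_count N j
  rw [hDvN] at v2
  set Ap := (CnotAux.DvG M j).connectedComponentMk (Sum.inl i) with hAp
  set A := (CnotAux.DeG M j).connectedComponentMk (Sum.inl i) with hA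
  set VM := ({c | ∃ s ∈ CnotAux.Sv M j, (CnotAux.DvG M j).connectedComponentMk s = c} :
    Set (CnotAux.DvG M j).ConnectedComponent) with hVM
  set VN := ({c | ∃ s ∈ CnotAux.Sv N j, (CnotAux.DvG M j).connectedComponentMk s = c} :
    Set (CnotAux.DvG M j).ConnectedComponent) with hVN
  set EM := ({c | ∃ s ∈ CnotAux.Se M j, (CnotAux.DeG M j).connectedComponentMk s = c} :
    Set (CnotAux.DeG M j).ConnectedComponent) with hEM
  set EN := ({c | ∃ s ∈ CnotAux.Se N j, (CnotAux.DeG M j).connectedComponentMk s = c} :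
    Set (CnotAux.DeG M j).ConnectedComponent) with hEN
  have hncard : VN.ncard = VM.ncard + 1 := by omega
  -- VN ⊆ insert Ap VM
  have hsub : VN ⊆ insert Ap VM := by
    rintro c ⟨s, ⟨b, rfl, hb | rfl⟩, rfl⟩
    · rw [hrowj] at hb
      rcases z1 _ _ hb with hib | hjb
      · refine Set.mem_insert_iff.mpr (Or.inl ?_)
        exact (ConnectedComponent.connectedComponentMk_eq_of_adj
          (CnotAux.bip_adj_inl_inr (Or.inl ⟨hij, hib⟩))).symm
      · exact Set.mem_insert_iff.mpr (Or.inr ⟨Sum.inr b, ⟨b, rfl, Or.inl hjb⟩, rfl⟩)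
    · exact Set.mem_insert_iff.mpr (Or.inr ⟨Sum.inr b, ⟨b, rfl, Or.inr rfl⟩, rfl⟩)
  have hVNeq : VN = insert Ap VM := by
    refine Set.eq_of_subset_of_ncard_le hsub ?_ (Set.toFinite _)
    calc (insert Ap VM).ncard ≤ VM.ncard + 1 := Set.ncard_insert_le _ _
    _ = VN.ncard := hncard.symm
  have hApnot : Ap ∉ VM := by
    intro hmem
    rw [Set.insert_eq_self.mpr hmem] at hVNeq
    rw [hVNeq] at hncard
    omega
  -- structural consequences
  have hH2 : ∀ b, M j b = 1 → (CnotAux.DvG M j).connectedComponentMk (Sum.inr b) ≠ Ap :=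
    fun b hb heq => hApnot ⟨Sum.inr b, ⟨b, rfl, Or.inl hb⟩, heq⟩
  have hH1 : ∀ b, M j b = 1 → ¬ M i b = 1 := by
    intro b hb hib
    exact hH2 b hb (ConnectedComponent.connectedComponentMk_eq_of_adj
      (CnotAux.bip_adj_inl_inr (Or.inl ⟨hij, hib⟩))).symm
  have hH2e : ∀ b, M j b = 1 →
      (CnotAux.DeG M j).connectedComponentMk (Sum.inr b) ≠ A := by
    intro b hb heq
    have hr : (CnotAux.DeG M j).Reachable (Sum.inr b) (Sum.inl i) :=
      ConnectedComponent.exact heq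
    have hr' : (CnotAux.DvG M j).Reachable (Sum.inr b) (Sum.inl i) :=
      hr.mono (CnotAux.bip_mono (fun a b h => Or.inl h))
    exact hH2 b hb (ConnectedComponent.sound hr')
  -- the e-side sets
  have hENeq : EN = insert A EM := by
    ext c
    rw [Set.mem_insert_iff]
    constructor
    · rintro ⟨s, ⟨b, rfl, hb⟩, rfl⟩
      rw [hrowj] at hb
      rcases z1 _ _ hb with hib | hjb
      · exact Or.inl (ConnectedComponent.connectedComponentMk_eq_of_adj
          (CnotAux.bip_adj_inl_inr ⟨hij, hib⟩)).symm
      · exact Or.inr ⟨Sum.inr b, ⟨b, rfl, hjb⟩, rfl⟩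
    · rintro (rfl | ⟨s, ⟨b, rfl, hb⟩, rfl⟩)
      · obtain ⟨b₀, hb₀⟩ := CnotAux.row_has_one hM i
        have hj0 : M j b₀ = 0 := z2 _ (fun h => hH1 b₀ h hb₀)
        refine ⟨Sum.inr b₀, ⟨b₀, rfl, ?_⟩, ?_⟩
        · rw [hrowj]; exact z3 _ _ hb₀ hj0
        · exact (ConnectedComponent.connectedComponentMk_eq_of_adj
            (CnotAux.bip_adj_inl_inr ⟨hij, hb₀⟩)).symm
      · refine ⟨Sum.inr b, ⟨b, rfl, ?_⟩, rfl⟩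
        rw [hrowj]
        exact z4 _ _ (z2 _ (hH1 b hb)) hb
  have hAnotE : A ∉ EM := by
    rintro ⟨s, ⟨b, rfl, hb⟩, heq⟩
    exact hH2e b hb heq
  have hEcard : EN.ncard = EM.ncard + 1 := by
    rw [hENeq]
    exact Set.ncard_insert_of_notMem hAnotE (Set.toFinite _)
  omega
end

section
/- Let M be an invertible n×n matrix over F_2 and let N be obtained from M by CNOT(i,j) (adding row i to row j) where i and j lie in different connected components of G_v(M). Then S(M) = S(N), where S(·) denotes the set of rivers (permutations σ with M_{k,σ(k)}=1 for all k). That is, a link gate is not a middle gate. -/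
open Matrix

variable {n : ℕ}

/-- A link gate (CNOT between different components of `G_v(M)`) does not change the set of rivers. -/
theorem stmt4 (n : ℕ) (M : Matrix (Fin n) (Fin n) (ZMod 2)) (hM : IsUnit M)
    (i j : Fin n) (hij : i ≠ j) (hsep : ¬ (Gv M).Reachable i j) :
    {σ : Equiv.Perm (Fin n) | IsRiver M σ} = {σ | IsRiver (cnotStep M i j) σ} := by
  have hzm : ∀ x : ZMod 2, x = 0 ∨ x = 1 := by decide
  have hadj : ∀ a b : Fin n, a ≠ b → M a b = 1 → (Gv M).Adj a b := by
    intro a b hab h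
    exact (SimpleGraph.fromRel_adj _ a b).2 ⟨hab, Or.inl h⟩
  -- M i k and M j k cannot both be 1
  have hclaim : ∀ k, M i k = 1 → M j k = 1 → False := by
    intro k h1 h2
    apply hsep
    by_cases hk : k = i
    · rw [hk] at h2; exact ((hadj j i (Ne.symm hij) h2).symm.reachable)
    · by_cases hk' : k = j
      · rw [hk'] at h1; exact (hadj i j hij h1).reachable
      · exact ((hadj i k (fun h => hk h.symm) h1).reachable).trans
          ((hadj j k (fun h => hk' h.symm) h2).reachable.symm)
  ext σ
  simp only [Set.mem_setOf_eq]
  constructor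
  · intro hr k
    by_cases hk : k = j
    · rw [hk, cnotStep, Matrix.updateRow_self, Pi.add_apply]
      have h2 : M j (σ j) = 1 := hr j
      have h1 : M i (σ j) = 0 := by
        rcases hzm (M i (σ j)) with h | h
        · exact h
        · exact absurd (hclaim _ h h2) (fun h => h)
      rw [h1, h2]; ring
    · rw [cnotStep, Matrix.updateRow_ne hk]; exact hr k
  · intro hr
    have hne : ∀ k, k ≠ j → M k (σ k) = 1 := by
      intro k hk
      have := hr k
      rwa [cnotStep, Matrix.updateRow_ne hk] at this
    have hj : M i (σ j) + M j (σ j) = 1 := by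
      have := hr j
      rwa [cnotStep, Matrix.updateRow_self, Pi.add_apply] at this
    rcases hzm (M i (σ j)) with h0 | h1
    · -- good case
      intro k
      by_cases hk : k = j
      · subst hk
        rw [h0, zero_add] at hj; exact hj
      · exact hne k hk
    · -- bad case: cardinality contradiction
      exfalso
      set A : Set (Fin n) := {k | (Gv M).Reachable i k} with hA
      have hjA : j ∉ A := hsep
      have hmap : ∀ k ∈ A, σ k ∈ A := by
        intro k hk
        have hkj : k ≠ j := fun h => hjA (h ▸ hk)
        have hMk := hne k hkj
        by_cases hfix : σ k = k
        · rwa [hfix]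
        · exact hk.trans ((hadj k (σ k) (fun h => hfix h.symm) hMk).reachable)
      have hσj : σ j ∈ A := by
        by_cases hfix : σ j = i
        · rw [hfix]; exact SimpleGraph.Reachable.refl i
        · exact (hadj i (σ j) (fun h => hfix h.symm) h1).reachable
      have himg : σ '' (insert j A) ⊆ A := by
        rintro x ⟨y, hy, rfl⟩
        rcases hy with rfl | hy
        · exact hσj
        · exact hmap y hy
      have hfin : A.Finite := Set.toFinite A
      have hcard1 : (σ '' (insert j A)).ncard = A.ncard + 1 := by
        rw [Set.ncard_image_of_injective _ σ.injective,
          Set.ncard_insert_of_notMem hjA hfin]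
      have hcard2 : (σ '' (insert j A)).ncard ≤ A.ncard :=
        Set.ncard_le_ncard himg hfin
      omega
end

section
/- Let S be a set of transpositions in S_n and let G be the graph on [n] whose edges are the pairs {i,j} with T_{ij} ∈ S. Two permutations σ, τ ∈ S_n are equivalent under the equivalence generated by left-composition with elements of S if and only if σ(A) = τ(A) for every connected component A of G. Equivalently, the labeling map K ↦ (a_1,...,a_n), where a_i = min_{σ∈K} σ^{-1}(i), is injective on equivalence classes. -/
open Matrix

variable {n : ℕ}

/-!
A chain of left multiplications by elements of `S` leading from `σ` to `τ` is a factorisation of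
`τ * σ⁻¹` over `S`, so `σ` and `τ` are equivalent iff `τ * σ⁻¹` lies in the group generated by `S`
(in a finite group the monoid and the group generated by `S` coincide). Composing transpositions
along a path of the graph shows that this group contains `swap x y` whenever `x` and `y` lie in the
same component; since a permutation of a finite set lies in a group generated by transpositions
iff it moves every point within its orbit, the group generated by `S` consists of the permutations
preserving every connected component. Finally, `τ * σ⁻¹` preserves every component iff `σ` and `τ` pull back every
component to the same set.
-/

open Equiv Relation

theorem reflTransGen_mul_left_iff {M : Type*} [Monoid M] {S : Set M} {a b : M} :
    ReflTransGen (fun x y => ∃ t ∈ S, y = t * x) a b ↔ ∃ m ∈ Submonoid.closure S, b = m * a := by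
  constructor
  · intro h
    induction h with
    | refl => exact ⟨1, one_mem _, (one_mul a).symm⟩
    | tail _ hstep ih =>
      obtain ⟨m, hm, rfl⟩ := ih
      obtain ⟨t, ht, rfl⟩ := hstep
      exact ⟨t * m, mul_mem (Submonoid.subset_closure ht) hm, (mul_assoc t m a).symm⟩
  · rintro ⟨m, hm, rfl⟩
    induction hm using Submonoid.closure_induction_left with
    | one => rw [one_mul]
    | mul_left t ht m _ ih => exact ih.tail ⟨t, ht, mul_assoc t m a⟩

theorem reflTransGen_mul_left_iff_mul_inv_mem {G : Type*} [Group G] {S : Set G} {a b : G} :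
    ReflTransGen (fun x y => ∃ t ∈ S, y = t * x) a b ↔ b * a⁻¹ ∈ Submonoid.closure S := by
  rw [reflTransGen_mul_left_iff]
  exact ⟨fun ⟨m, hm, h⟩ => by rwa [h, mul_inv_cancel_right],
    fun h => ⟨_, h, (inv_mul_cancel_right b a).symm⟩⟩

namespace SimpleGraph

variable {α : Type*}

def componentStabilizer (G : SimpleGraph α) : Subgroup (Perm α) where
  carrier := {f | ∀ x, G.Reachable x (f x)}
  one_mem' x := Reachable.refl x
  mul_mem' hf hg x := (hg x).trans (hf _)
  inv_mem' {f} hf x := by simpa using (hf (f⁻¹ x)).symm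

theorem mul_inv_mem_componentStabilizer_iff (G : SimpleGraph α) {σ τ : Perm α} :
    τ * σ⁻¹ ∈ G.componentStabilizer ↔
      ∀ v, σ ⁻¹' {i | G.Reachable v i} = τ ⁻¹' {i | G.Reachable v i} := by
  constructor
  · intro h v
    ext k
    have hk : G.Reachable (σ k) (τ k) := by simpa using h (σ k)
    exact ⟨fun hv => hv.trans hk, fun hv => hv.trans hk.symm⟩
  · intro h x
    have hx := Set.ext_iff.1 (h x) (σ⁻¹ x)
    simp only [Set.mem_preimage, Set.mem_ofPred_eq, Perm.inv_def, apply_symm_apply] at hx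
    exact hx.1 (Reachable.refl x)

variable [DecidableEq α]

def swapGraph (S : Set (Perm α)) : SimpleGraph α :=
  fromRel fun a b => swap a b ∈ S

variable {S : Set (Perm α)}

theorem swapGraph_adj {a b : α} : (swapGraph S).Adj a b ↔ a ≠ b ∧ swap a b ∈ S := by
  rw [swapGraph, fromRel_adj, swap_comm b a, or_self]

theorem swap_mem_closure_of_reachable {a b : α} (h : (swapGraph S).Reachable a b) :
    swap a b ∈ Subgroup.closure S := by
  rw [reachable_iff_reflTransGen] at h
  induction h with
  | refl => rw [swap_self]; exact one_mem _
  | tail _ hbc ih =>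
    exact SubmonoidClass.swap_mem_trans _ ih (Subgroup.subset_closure (swapGraph_adj.1 hbc).2)

theorem closure_le_componentStabilizer (hS : ∀ t ∈ S, t.IsSwap) :
    Subgroup.closure S ≤ (swapGraph S).componentStabilizer := by
  refine (Subgroup.closure_le _).2 fun t ht x => ?_
  obtain ⟨a, b, hab, rfl⟩ := hS t ht
  have hadj : (swapGraph S).Adj a b := swapGraph_adj.2 ⟨hab, ht⟩
  rw [swap_apply_def]
  split_ifs with hxa hxb
  · exact hxa ▸ hadj.reachable
  · exact hxb ▸ hadj.symm.reachable
  · exact Reachable.refl x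

theorem closure_eq_componentStabilizer [Finite α] (hS : ∀ t ∈ S, t.IsSwap) :
    Subgroup.closure S = (swapGraph S).componentStabilizer := by
  refine le_antisymm (closure_le_componentStabilizer hS) fun f hf => ?_
  refine (mem_closure_isSwap hS).2 ⟨Set.toFinite _, fun x => ?_⟩
  exact ⟨⟨swap x (f x), swap_mem_closure_of_reachable (hf x)⟩, swap_apply_left x (f x)⟩

end SimpleGraph

open SimpleGraph in
/-- Two permutations are equivalent under left-composition by transpositions in `S` iff
the preimages of every connected component of the associated graph `G` agree; hence the
labeling map is injective on equivalence classes. -/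
theorem stmt8 (n : ℕ) (S : Set (Equiv.Perm (Fin n)))
    (hS : ∀ τ ∈ S, ∃ a b, a ≠ b ∧ τ = Equiv.swap a b)
    (G : SimpleGraph (Fin n))
    (hG : ∀ a b, G.Adj a b ↔ a ≠ b ∧ Equiv.swap a b ∈ S)
    (σ τ : Equiv.Perm (Fin n)) :
    Relation.ReflTransGen (fun x y => ∃ t ∈ S, y = t * x) σ τ ↔
      ∀ A : Set (Fin n), (∃ v, A = {i | G.Reachable v i}) → ⇑σ⁻¹ '' A = ⇑τ⁻¹ '' A := by
  obtain rfl : G = swapGraph S := by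
    ext a b
    rw [hG, swapGraph_adj]
  rw [reflTransGen_mul_left_iff_mul_inv_mem, ← Subgroup.closure_toSubmonoid_of_finite,
    Subgroup.mem_toSubmonoid, closure_eq_componentStabilizer hS,
    mul_inv_mem_componentStabilizer_iff]
  simp only [forall_exists_index, Perm.inv_def, image_eq_preimage_symm, symm_symm]
  rw [forall_comm]
  simp only [forall_eq]
end

section
/- For any invertible n×n matrix M over F_2, the matrix M ∧ M^{-⊤} + I equals I + Σ_{σ ∈ S(M)} P_σ over F_2, where ∧ denotes entrywise product, M^{-⊤} is the inverse transpose of M, S(M) is the set of rivers of M, and P_σ is the permutation matrix of σ. In other words, the (i,j) entry of M ∧ M^{-⊤} gives the parity of the number of rivers σ of M with σ(i)=j. -/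
open Matrix

variable {n : ℕ}

lemma zmod2_cases (x : ZMod 2) : x = 0 ∨ x = 1 := by revert x; decide

/-- `M ∧ M^{-⊤} + I = I + ∑_{σ ∈ S(M)} P_σ` over `F_2`. -/
theorem stmt9 (n : ℕ) (M : Matrix (Fin n) (Fin n) (ZMod 2)) (hM : IsUnit M) :
    M.hadamard (M⁻¹)ᵀ + 1 =
      1 + ∑ σ ∈ Finset.univ.filter (fun σ : Equiv.Perm (Fin n) => IsRiver M σ), Pmat σ := by
  have hdet : M.det = 1 := by
    have h := (Matrix.isUnit_iff_isUnit_det M).mp hM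
    rcases zmod2_cases M.det with h0 | h1
    · exact absurd h0 (by simpa using h.ne_zero)
    · exact h1
  have hinv : M⁻¹ = M.adjugate := by
    rw [Matrix.inv_def, hdet]; simp
  ext i j
  have key : M i j * M⁻¹ j i
      = ∑ σ ∈ Finset.univ.filter (fun σ : Equiv.Perm (Fin n) => IsRiver M σ),
          Pmat σ i j := by
    rw [hinv, Matrix.adjugate_apply, ← Matrix.det_transpose, Matrix.det_apply',
      Finset.mul_sum, Finset.sum_filter]
    refine Finset.sum_congr rfl fun σ _ => ?_
    have hsign : ((Equiv.Perm.sign σ : ℤ) : ZMod 2) = 1 := by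
      rcases Int.units_eq_one_or (Equiv.Perm.sign σ) with h | h <;> rw [h] <;> decide
    simp only [Matrix.transpose_apply, hsign, one_mul]
    have hprod : (∏ k, M.updateRow i (Pi.single j 1) k (σ k))
        = (if σ i = j then (1:ZMod 2) else 0) * ∏ k ∈ Finset.univ.erase i, M k (σ k) := by
      rw [← Finset.mul_prod_erase Finset.univ _ (Finset.mem_univ i),
        Matrix.updateRow_self, Pi.single_apply]
      congr 1
      refine Finset.prod_congr rfl fun k hk => ?_
      rw [Matrix.updateRow_ne (Finset.ne_of_mem_erase hk)]
    have hprodM : (∏ k, M k (σ k)) = M i (σ i) * ∏ k ∈ Finset.univ.erase i, M k (σ k) :=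
      (Finset.mul_prod_erase Finset.univ _ (Finset.mem_univ i)).symm
    have hriver : (∏ k, M k (σ k)) = (if IsRiver M σ then (1:ZMod 2) else 0) := by
      by_cases h : IsRiver M σ
      · simp [h, Finset.prod_eq_one fun k _ => h k]
      · simp only [h, if_false]
        by_contra hne
        rcases zmod2_cases (∏ k, M k (σ k)) with h0 | h1
        · exact hne h0
        · refine h fun k => ?_
          rcases zmod2_cases (M k (σ k)) with hk | hk
          · rw [Finset.prod_eq_zero (Finset.mem_univ k) hk] at h1
            exact absurd h1 (by decide)
          · exact hk
    rw [hprod]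
    show _ = if IsRiver M σ then (if σ i = j then (1:ZMod 2) else 0) else 0
    by_cases hij : σ i = j
    · rw [if_pos hij, one_mul, ← hij, ← hprodM, hriver]
    · simp [hij]
  simp only [Matrix.add_apply, Matrix.hadamard_apply, Matrix.transpose_apply,
    Matrix.sum_apply]
  rw [key, add_comm]
end

section
/- If an invertible n×n matrix M over F_2 is a product of CNOT gate matrices all of which are link gates (i.e., in the step-by-step synthesis from I, each gate decreases the number of vertex-connectivity components), then the influence graph I(M) — the directed graph on [n] with an arc i→j iff i≠j and M_{j,i}=1 — is acyclic. -/
open Matrix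

variable {n : ℕ}

lemma zmod2_sum_eq_one {a b : ZMod 2} (h : a + b = 1) :
    (a = 1 ∧ b = 0) ∨ (a = 0 ∧ b = 1) := by revert a b; decide

lemma gv_adj {M : Matrix (Fin n) (Fin n) (ZMod 2)} {a b : Fin n}
    (hne : a ≠ b) (h : M a b = 1) : (Gv M).Adj a b := by
  rw [Gv, SimpleGraph.fromRel_adj]; exact ⟨hne, Or.inl h⟩

lemma gv_reach {M : Matrix (Fin n) (Fin n) (ZMod 2)} {a b : Fin n}
    (h : M a b = 1) : (Gv M).Reachable a b := by
  by_cases hne : a = b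
  · rw [hne]
  · exact (gv_adj hne h).reachable

lemma link_not_reachable {M : Matrix (Fin n) (Fin n) (ZMod 2)} {i j : Fin n}
    (hlink : vcomp (cnotStep M i j) + 1 = vcomp M) :
    ¬ (Gv M).Reachable i j := by
  intro hreach
  set N := cnotStep M i j with hN
  have entry : ∀ a b : Fin n, N a b = 1 → (Gv M).Reachable a b := by
    intro a b h1
    by_cases haj : a = j
    · subst haj
      rw [hN, cnotStep, Matrix.updateRow_self, Pi.add_apply] at h1
      rcases zmod2_sum_eq_one h1 with ⟨hi1, _⟩ | ⟨_, hj1⟩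
      · exact hreach.symm.trans (gv_reach hi1)
      · exact gv_reach hj1
    · rw [hN, cnotStep, Matrix.updateRow_ne haj] at h1
      exact gv_reach h1
  have key : ∀ a b, (Gv N).Adj a b → (Gv M).Reachable a b := by
    intro a b hab
    rw [Gv, SimpleGraph.fromRel_adj] at hab
    rcases hab.2 with h | h
    · exact entry a b h
    · exact (entry b a h).symm
  have hrr : ∀ a b, (Gv N).Reachable a b → (Gv M).Reachable a b := by
    intro a b h
    obtain ⟨w⟩ := h
    induction w with
    | nil => exact SimpleGraph.Reachable.refl _
    | cons h _ ih => exact (key _ _ h).trans ih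
  let φ : (Gv N).ConnectedComponent → (Gv M).ConnectedComponent :=
    Quot.lift (fun v => (Gv M).connectedComponentMk v)
      (fun a b h => SimpleGraph.ConnectedComponent.sound (hrr a b h))
  have hsurj : Function.Surjective φ := by
    intro c
    refine c.ind (fun v => ⟨(Gv N).connectedComponentMk v, rfl⟩)
  have hle : vcomp M ≤ vcomp N := Nat.card_le_card_of_surjective φ hsurj
  omega

lemma zmod2_ne (h : (0 : ZMod 2) = 1) : False := by simp at h

lemma reach_orbit {M : Matrix (Fin n) (Fin n) (ZMod 2)} {σ : Equiv.Perm (Fin n)} {j : Fin n}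
    (hrow : ∀ k, k ≠ j → M k (σ k) = 1) : (Gv M).Reachable (σ j) j := by
  have key : ∀ m : ℕ, ∀ x : Fin n, (σ ^ m) x = j → (Gv M).Reachable x j := by
    intro m
    induction m with
    | zero => intro x hx; simp at hx; rw [hx]
    | succ m ih =>
      intro x hx
      by_cases hxj : x = j
      · rw [hxj]
      · have hx' : (σ ^ m) (σ x) = j := by
          rw [pow_succ] at hx
          simpa [Equiv.Perm.mul_apply] using hx
        exact (gv_reach (hrow x hxj)).trans (ih (σ x) hx')
  have hord : 0 < orderOf σ := orderOf_pos σ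
  have hpow : (σ ^ (orderOf σ - 1)) (σ j) = j := by
    have h1 : (σ ^ (orderOf σ - 1)) * σ = σ ^ orderOf σ := by
      rw [← pow_succ]; congr 1; omega
    calc (σ ^ (orderOf σ - 1)) (σ j) = ((σ ^ (orderOf σ - 1)) * σ) j := rfl
    _ = (σ ^ orderOf σ) j := by rw [h1]
    _ = j := by rw [pow_orderOf_eq_one]; rfl
  exact key _ _ hpow

lemma step_unique {M : Matrix (Fin n) (Fin n) (ZMod 2)} {i j : Fin n}
    (hij : i ≠ j) (hlink : vcomp (cnotStep M i j) + 1 = vcomp M)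
    (huniq : ∀ σ, IsRiver M σ ↔ σ = 1) :
    ∀ σ, IsRiver (cnotStep M i j) σ ↔ σ = 1 := by
  have hreach := link_not_reachable hlink
  have hdiag : ∀ k, M k k = 1 := fun k => by
    have h1 := (huniq 1).mpr rfl
    simpa [IsRiver] using h1 k
  have hMij : M i j = 0 := by
    by_contra h
    have h1 : M i j = 1 := by
      rcases (show ∀ x : ZMod 2, x = 0 ∨ x = 1 by decide) (M i j) with h0 | h1
      · exact absurd h0 h
      · exact h1
    exact hreach (gv_reach h1)
  intro σ
  constructor
  · intro hr
    have hrow : ∀ k, k ≠ j → M k (σ k) = 1 := fun k hk => by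
      have h := hr k; rwa [cnotStep, Matrix.updateRow_ne hk] at h
    have hj : M i (σ j) + M j (σ j) = 1 := by
      have h := hr j; rwa [cnotStep, Matrix.updateRow_self, Pi.add_apply] at h
    rcases zmod2_sum_eq_one hj with ⟨hi1, _⟩ | ⟨_, hj1⟩
    · exfalso
      exact hreach ((gv_reach hi1).trans (reach_orbit hrow))
    · have hrM : IsRiver M σ := fun k => by
        by_cases hk : k = j
        · subst hk; exact hj1
        · exact hrow k hk
      exact (huniq σ).mp hrM
  · rintro rfl
    intro k
    by_cases hk : k = j
    · subst hk
      simp [cnotStep, Matrix.updateRow_self, hMij, hdiag]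
    · simp [cnotStep, Matrix.updateRow_ne hk, hdiag]

lemma no_cycle_of_unique_river {M : Matrix (Fin n) (Fin n) (ZMod 2)}
    (huniq : ∀ σ, IsRiver M σ ↔ σ = 1) (i : Fin n) :
    ¬ Relation.TransGen (fun a b : Fin n => a ≠ b ∧ M b a = 1) i i := by
  classical
  set r : Fin n → Fin n → Prop := fun a b => a ≠ b ∧ M b a = 1 with hr
  intro hcyc
  have hdiag : ∀ k, M k k = 1 := fun k => by
    have h1 := (huniq 1).mpr rfl
    simpa [IsRiver] using h1 k
  set S : Fin n → Prop := fun x => Relation.TransGen r i x ∧ Relation.TransGen r x i with hS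
  have hiS : S i := ⟨hcyc, hcyc⟩
  have hpred : ∀ x, S x → ∃ p, S p ∧ p ≠ x ∧ M x p = 1 := by
    intro x hx
    obtain ⟨p, hip, hpx⟩ := Relation.TransGen.tail'_iff.mp hx.1
    have hpS : S p := by
      constructor
      · rcases Relation.reflTransGen_iff_eq_or_transGen.mp hip with h | h
        · rw [h]; exact hcyc
        · exact h
      · exact Relation.TransGen.head hpx hx.2
    exact ⟨p, hpS, hpx.1, hpx.2⟩
  set g : Fin n → Fin n := fun x => if h : S x then (hpred x h).choose else x with hg
  have hgS : ∀ x (h : S x), S (g x) ∧ g x ≠ x ∧ M x (g x) = 1 := by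
    intro x h
    have := (hpred x h).choose_spec
    simp only [hg, dif_pos h]
    exact this
  have hgfix : ∀ x, ¬ S x → g x = x := fun x h => by simp only [hg, dif_neg h]
  have hrow : ∀ x, M x (g x) = 1 := by
    intro x
    by_cases h : S x
    · exact (hgS x h).2.2
    · rw [hgfix x h]; exact hdiag x
  -- periodic points
  set P : Fin n → Prop := fun x => ∃ m, 0 < m ∧ g^[m] x = x with hP
  have hgP : ∀ x, P x → P (g x) := by
    rintro x ⟨m, hm, hx⟩
    exact ⟨m, hm, by rw [← Function.iterate_succ_apply, Function.iterate_succ_apply', hx]⟩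
  have hSg : ∀ m : ℕ, S (g^[m] i) := by
    intro m
    induction m with
    | zero => exact hiS
    | succ m ih => rw [Function.iterate_succ_apply']; exact (hgS _ ih).1
  -- pigeonhole: some iterate of i is periodic
  obtain ⟨s, t, hst, hmap⟩ := Finite.exists_ne_map_eq_of_infinite (fun m : ℕ => g^[m] i)
  have hx0 : ∃ x0, P x0 ∧ S x0 := by
    rcases Nat.lt_or_ge s t with h | h
    · refine ⟨g^[s] i, ⟨t - s, by omega, ?_⟩, hSg s⟩
      rw [← Function.iterate_add_apply]
      have : t - s + s = t := by omega
      rw [this]; exact hmap.symm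
    · have hts : t < s := by omega
      refine ⟨g^[t] i, ⟨s - t, by omega, ?_⟩, hSg t⟩
      rw [← Function.iterate_add_apply]
      have : s - t + t = s := by omega
      rw [this]; exact hmap
  obtain ⟨x0, hx0P, hx0S⟩ := hx0
  -- permutation on periodic points
  let fP : {x : Fin n // P x} → {x : Fin n // P x} := fun x => ⟨g x.1, hgP x.1 x.2⟩
  have hinj : Function.Injective fP := by
    rintro ⟨x, mx, hmx, hxp⟩ ⟨y, my, hmy, hyp⟩ h
    simp only [fP, Subtype.mk.injEq] at h ⊢
    have hmul : 0 < mx * my := Nat.mul_pos hmx hmy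
    have perx : g^[mx * my] x = x := by
      rw [Function.iterate_mul]; exact Function.iterate_fixed hxp my
    have pery : g^[mx * my] y = y := by
      rw [mul_comm, Function.iterate_mul]; exact Function.iterate_fixed hyp mx
    have e1 : g^[mx * my - 1] (g x) = x := by
      rw [← Function.iterate_succ_apply]
      have hh : (mx * my - 1).succ = mx * my := by omega
      rw [hh]; exact perx
    have e2 : g^[mx * my - 1] (g y) = y := by
      rw [← Function.iterate_succ_apply]
      have hh : (mx * my - 1).succ = mx * my := by omega
      rw [hh]; exact pery
    rw [h] at e1
    rw [e2] at e1
    exact e1.symm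
  have hbij : Function.Bijective fP := Finite.injective_iff_bijective.mp hinj
  let e : Equiv.Perm {x : Fin n // P x} := Equiv.ofBijective fP hbij
  let σ : Equiv.Perm (Fin n) := Equiv.Perm.ofSubtype e
  have hσmem : ∀ x (h : P x), σ x = g x := by
    intro x h
    rw [show σ x = _ from Equiv.Perm.ofSubtype_apply_of_mem e h]
    rfl
  have hriver : IsRiver M σ := by
    intro x
    by_cases h : P x
    · rw [hσmem x h]; exact hrow x
    · rw [Equiv.Perm.ofSubtype_apply_of_not_mem e h]; exact hdiag x
  have hσ1 : σ = 1 := (huniq σ).mp hriver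
  have : σ x0 = x0 := by rw [hσ1]; rfl
  rw [hσmem x0 hx0P] at this
  exact (hgS x0 hx0S).2.1 this

/-- If `M` is synthesized from `I` using only link gates, then the influence graph of `M`
(arc `i → j` iff `i ≠ j` and `M j i = 1`) is acyclic. -/
theorem stmt17 (n k : ℕ) (M : Matrix (Fin n) (Fin n) (ZMod 2))
    (f : ℕ → Matrix (Fin n) (Fin n) (ZMod 2)) (h0 : f 0 = 1) (hk : f k = M)
    (hstep : ∀ t < k, ∃ i j : Fin n, i ≠ j ∧ f (t + 1) = cnotStep (f t) i j)
    (hlink : ∀ t < k, vcomp (f (t + 1)) + 1 = vcomp (f t)) :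
    ∀ i : Fin n, ¬ Relation.TransGen (fun a b : Fin n => a ≠ b ∧ M b a = 1) i i := by
  have main : ∀ t, t ≤ k → ∀ σ, IsRiver (f t) σ ↔ σ = 1 := by
    intro t
    induction t with
    | zero =>
      intro _ σ
      rw [h0]
      constructor
      · intro hr
        apply Equiv.ext
        intro x
        have h := hr x
        rw [Matrix.one_apply] at h
        by_cases hx : x = σ x
        · simpa using hx.symm
        · rw [if_neg hx] at h
          exact absurd h (by decide)
      · rintro rfl k'
        simp [IsRiver, Matrix.one_apply]
    | succ t ih =>
      intro ht σ
      obtain ⟨i, j, hij, hstep'⟩ := hstep t (by omega)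
      rw [hstep']
      exact step_unique hij (by rw [← hstep']; exact hlink t (by omega)) (ih (by omega)) σ
  have huniq := main k le_rfl
  rw [hk] at huniq
  exact no_cycle_of_unique_river huniq
end

section
/- Let σ be an n-cycle and consider any synthesis of P_σ by exactly 3(n−1) CNOT gates. Then the link gates in the synthesis form a spanning tree on [n]: i.e., there is no nontrivial partition [n] = A ⊔ B such that no gate in the synthesis operates between a row of A and a row of B. -/
open Matrix

variable {n : ℕ}

/-- In any synthesis of an `n`-cycle permutation matrix by exactly `3(n-1)` CNOT gates, there is
no nontrivial partition of the qubits such that no gate operates between the two parts. -/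
theorem stmt19 (n : ℕ) (hn : 2 ≤ n) (σ : Equiv.Perm (Fin n))
    (hc : σ.IsCycle) (hs : σ.support = Finset.univ)
    (L : List (Fin n × Fin n)) (hlen : L.length = 3 * (n - 1))
    (hne : ∀ p ∈ L, p.1 ≠ p.2)
    (hsynth : L.foldl (fun N p => cnotStep N p.1 p.2) 1 = Pmat σ)
    (A : Set (Fin n)) (hA : ∀ p ∈ L, (p.1 ∈ A ↔ p.2 ∈ A)) :
    A = ∅ ∨ A = Set.univ := by
  classical
  -- invariant: off-block entries are 0
  have key : ∀ (L' : List (Fin n × Fin n)) (M : Matrix (Fin n) (Fin n) (ZMod 2)),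
      (∀ p ∈ L', (p.1 ∈ A ↔ p.2 ∈ A)) →
      (∀ i j, ¬(i ∈ A ↔ j ∈ A) → M i j = 0) →
      (∀ i j, ¬(i ∈ A ↔ j ∈ A) → (L'.foldl (fun N p => cnotStep N p.1 p.2) M) i j = 0) := by
    intro L'
    induction L' with
    | nil => intro M _ hM; simpa using hM
    | cons p t ih =>
      intro M hp hM
      simp only [List.foldl_cons]
      apply ih
      · intro q hq; exact hp q (List.mem_cons_of_mem _ hq)
      · intro i j hij
        have hpA := hp p (List.mem_cons_self)
        unfold cnotStep
        by_cases h : i = p.2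
        · subst h
          rw [Matrix.updateRow_self]
          have h1 : M p.1 j = 0 := hM _ _ (by tauto)
          have h2 : M p.2 j = 0 := hM _ _ hij
          simp [h1, h2]
        · rw [Matrix.updateRow_ne h]
          exact hM _ _ hij
  have hId : ∀ i j : Fin n, ¬(i ∈ A ↔ j ∈ A) → (1 : Matrix (Fin n) (Fin n) (ZMod 2)) i j = 0 := by
    intro i j hij
    have : i ≠ j := by rintro rfl; exact hij Iff.rfl
    simp [Matrix.one_apply, this]
  have hP : ∀ i j : Fin n, ¬(i ∈ A ↔ j ∈ A) → Pmat σ i j = 0 :=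
    hsynth ▸ key L 1 hA hId
  -- A is σ-invariant
  have hinv : ∀ i : Fin n, i ∈ A ↔ σ i ∈ A := by
    intro i
    by_contra h
    have := hP i (σ i) h
    simp [Pmat] at this
  have hpow : ∀ (k : ℕ) (a : Fin n), a ∈ A → (σ ^ k) a ∈ A := by
    intro k
    induction k with
    | zero => simp
    | succ m ih =>
      intro a ha
      rw [pow_succ', Equiv.Perm.mul_apply]
      exact (hinv _).mp (ih a ha)
  by_contra h
  push_neg at h
  obtain ⟨h1, h2⟩ := h
  obtain ⟨a, ha⟩ := h1
  obtain ⟨b, hb⟩ : ∃ b, b ∉ A := by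
    by_contra hb; push_neg at hb
    exact h2 (Set.eq_univ_of_forall hb)
  have hsa : σ a ≠ a := by
    have : a ∈ σ.support := hs ▸ Finset.mem_univ a
    exact Equiv.Perm.mem_support.mp this
  have hsb : σ b ≠ b := by
    have : b ∈ σ.support := hs ▸ Finset.mem_univ b
    exact Equiv.Perm.mem_support.mp this
  obtain ⟨k, hk⟩ := hc.exists_pow_eq hsa hsb
  exact hb (hk ▸ hpow k a ha)
end
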